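/- Let (X,d) be a compact metric space with a fixed reference probability measure m, and assume (X,d,m) is regular: every coupling γ between m and any ν ∈ P(X) achieving the infimum defining W₂(m,ν) is of the form γ = (Id,T)_# m for some measurable map T : X → X. Let μ ∈ P(X) and let B(μ) be the unique minimizer of ν ↦ W₂(ν,m) among all ν ∈ P(X) with supp ν ⊆ b(μ). Then supp(m) ∩ b(μ) ⊆ supp B(μ). -/

import Mathlib

open MeasureTheory Filter

section Defs

variable {X : Type*} [MetricSpace X] [MeasurableSpace X]

/-- The set of metric barycenters of `μ`: the minimizers over `y ∈ X` of
`y ↦ ∫ d(x,y)² dμ(x)`. -/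
def bary (μ : ProbabilityMeasure X) : Set X :=
  {y : X | ∀ z : X,
    ∫ x, dist x y ^ 2 ∂(μ : Measure X) ≤ ∫ x, dist x z ^ 2 ∂(μ : Measure X)}

/-- `γ` is a coupling of `μ` and `ν`: a measure on `X × X` with marginals `μ` and `ν`. -/
def IsCoupling (γ : Measure (X × X)) (μ ν : ProbabilityMeasure X) : Prop :=
  γ.map Prod.fst = (μ : Measure X) ∧ γ.map Prod.snd = (ν : Measure X)

/-- The squared 2-Wasserstein distance `W₂(μ,ν)²`. -/
noncomputable def W2sq (μ ν : ProbabilityMeasure X) : ℝ :=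
  sInf {c : ℝ | ∃ γ : Measure (X × X), IsCoupling γ μ ν ∧
    c = ∫ p, dist p.1 p.2 ^ 2 ∂γ}

/-- The 2-Wasserstein distance `W₂(μ,ν)`. -/
noncomputable def W2 (μ ν : ProbabilityMeasure X) : ℝ := Real.sqrt (W2sq μ ν)

/-- The support of a probability measure: the set of points all of whose open
neighbourhoods have positive measure. -/
def mSupport (μ : ProbabilityMeasure X) : Set X :=
  {x : X | ∀ U : Set X, IsOpen U → x ∈ U → (μ : Measure X) U ≠ 0}

/-- `(X,d,m)` is regular: every coupling between `m` and any `ν ∈ P(X)` achieving the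
infimum defining `W₂(m,ν)` is of the form `(Id,T)_# m` for some measurable map `T`. -/
def Regular (m : ProbabilityMeasure X) : Prop :=
  ∀ ν : ProbabilityMeasure X, ∀ γ : Measure (X × X), IsCoupling γ m ν →
    (∫ p, dist p.1 p.2 ^ 2 ∂γ) = W2sq m ν →
    ∃ T : X → X, Measurable T ∧ γ = (m : Measure X).map (fun x => (x, T x))

/-- The variance of `μ`: the minimal value of `y ↦ ∫ d(x,y)² dμ(x)`. -/
noncomputable def mvar (μ : ProbabilityMeasure X) : ℝ :=
  ⨅ y : X, ∫ x, dist x y ^ 2 ∂(μ : Measure X)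

end Defs

/-!
Suppose `x ∈ supp m ∩ b(μ)` lies at distance `3ε > 0` from `supp B(μ)`, and let `U` be the open
`ε`-ball around `x`. In a plan from `B(μ)` to `m` whose cost is within `3ε² m(U)` of optimal, let
the mass delivered into `U` start at `x` instead. Each unit of it used to travel at least `2ε` and
now travels less than `ε`, so the new plan costs less than `W₂(B(μ),m)²`. Its first marginal is
supported in `supp B(μ) ∪ {x} ⊆ b(μ)`, contradicting the minimality of `B(μ)`.
-/

open Set Metric

lemma Continuous.integrable_of_compactSpace {Y : Type*} [TopologicalSpace Y] [CompactSpace Y]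
    [MeasurableSpace Y] [OpensMeasurableSpace Y] {f : Y → ℝ} (hf : Continuous f) (μ : Measure Y)
    [IsFiniteMeasure μ] : Integrable f μ :=
  (BoundedContinuousFunction.mkOfCompact ⟨f, hf⟩).integrable μ

lemma mSupport_eq_support {X : Type*} [MetricSpace X] [MeasurableSpace X]
    (μ : ProbabilityMeasure X) : mSupport μ = (μ : Measure X).support := by
  ext x
  simp only [mSupport, Measure.support_eq_forall_isOpen, mem_ofPred_eq, pos_iff_ne_zero]
  exact forall_congr' fun U => Imp.swap

section Coupling

variable {X : Type*} [MeasurableSpace X]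

lemma IsCoupling.isProbabilityMeasure {γ : Measure (X × X)} {μ ν : ProbabilityMeasure X}
    (h : IsCoupling γ μ ν) : IsProbabilityMeasure γ := by
  have : IsProbabilityMeasure (γ.map Prod.fst) := h.1 ▸ inferInstance
  exact Measure.isProbabilityMeasure_of_map Prod.fst

lemma exists_isCoupling_of_map_snd {γ : Measure (X × X)} {ν : ProbabilityMeasure X}
    (h : γ.map Prod.snd = ν) :
    ∃ μ : ProbabilityMeasure X, (μ : Measure X) = γ.map Prod.fst ∧ IsCoupling γ μ ν := by
  have : IsProbabilityMeasure (γ.map Prod.snd) := h ▸ inferInstance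
  have : IsProbabilityMeasure γ := Measure.isProbabilityMeasure_of_map Prod.snd
  exact ⟨⟨γ.map Prod.fst, Measure.isProbabilityMeasure_map measurable_fst.aemeasurable⟩,
    rfl, rfl, h⟩

lemma isCoupling_prod (μ ν : ProbabilityMeasure X) : IsCoupling ((μ : Measure X).prod ν) μ ν :=
  ⟨Measure.map_fst_prod.trans (by simp), Measure.map_snd_prod.trans (by simp)⟩

lemma IsCoupling.ae_fst_mem_support [TopologicalSpace X] [HereditarilyLindelofSpace X]
    {γ : Measure (X × X)} {μ ν : ProbabilityMeasure X} (h : IsCoupling γ μ ν) :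
    ∀ᵐ p ∂γ, p.1 ∈ (μ : Measure X).support :=
  ae_of_ae_map measurable_fst.aemeasurable (h.1 ▸ Measure.support_mem_ae)

end Coupling

section Wasserstein

variable {X : Type*} [MetricSpace X] [MeasurableSpace X]

def couplingCosts (μ ν : ProbabilityMeasure X) : Set ℝ :=
  {c : ℝ | ∃ γ : Measure (X × X), IsCoupling γ μ ν ∧ c = ∫ p, dist p.1 p.2 ^ 2 ∂γ}

lemma integral_mem_couplingCosts {γ : Measure (X × X)} {μ ν : ProbabilityMeasure X}
    (h : IsCoupling γ μ ν) : ∫ p, dist p.1 p.2 ^ 2 ∂γ ∈ couplingCosts μ ν :=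
  ⟨γ, h, rfl⟩

lemma zero_mem_lowerBounds_couplingCosts (μ ν : ProbabilityMeasure X) :
    0 ∈ lowerBounds (couplingCosts μ ν) := by
  rintro _ ⟨γ, -, rfl⟩
  exact integral_nonneg fun p => by positivity

lemma W2sq_le_integral {γ : Measure (X × X)} {μ ν : ProbabilityMeasure X}
    (h : IsCoupling γ μ ν) : W2sq μ ν ≤ ∫ p, dist p.1 p.2 ^ 2 ∂γ :=
  csInf_le ⟨0, zero_mem_lowerBounds_couplingCosts μ ν⟩ (integral_mem_couplingCosts h)

lemma W2sq_nonneg (μ ν : ProbabilityMeasure X) : 0 ≤ W2sq μ ν :=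
  le_csInf ⟨_, integral_mem_couplingCosts (isCoupling_prod μ ν)⟩
    (zero_mem_lowerBounds_couplingCosts μ ν)

lemma exists_isCoupling_integral_lt (μ ν : ProbabilityMeasure X) {κ : ℝ} (hκ : 0 < κ) :
    ∃ γ : Measure (X × X), IsCoupling γ μ ν ∧ ∫ p, dist p.1 p.2 ^ 2 ∂γ < W2sq μ ν + κ := by
  obtain ⟨_, ⟨γ, hγ, rfl⟩, hlt⟩ :=
    Real.lt_sInf_add_pos ⟨_, integral_mem_couplingCosts (isCoupling_prod μ ν)⟩ hκ
  exact ⟨γ, hγ, hlt⟩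

end Wasserstein

section ReplaceFst

variable {X : Type*} [MeasurableSpace X]

noncomputable def replaceFstOn (γ : Measure (X × X)) (B : Set X) (x : X) : Measure (X × X) :=
  γ.restrict (Prod.snd ⁻¹' B)ᶜ + (γ.restrict (Prod.snd ⁻¹' B)).map fun p => (x, p.2)

variable {γ : Measure (X × X)} {B : Set X}

lemma map_snd_replaceFstOn (hB : MeasurableSet B) (x : X) :
    (replaceFstOn γ B x).map Prod.snd = γ.map Prod.snd := by
  have hmk : Measurable fun p : X × X => (x, p.2) := measurable_const.prodMk measurable_snd
  rw [replaceFstOn, Measure.map_add _ _ measurable_snd, Measure.map_map measurable_snd hmk,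
    Function.comp_def, ← Measure.map_add _ _ measurable_snd, add_comm,
    Measure.restrict_add_restrict_compl (measurable_snd hB)]

lemma support_map_fst_replaceFstOn_subset [TopologicalSpace X] [T1Space X]
    [OpensMeasurableSpace X] (x : X) :
    ((replaceFstOn γ B x).map Prod.fst).support ⊆ insert x (γ.map Prod.fst).support := by
  have hmk : Measurable fun p : X × X => (x, p.2) := measurable_const.prodMk measurable_snd
  rw [replaceFstOn, Measure.map_add _ _ measurable_fst, Measure.support_add,
    Measure.map_map measurable_fst hmk, union_comm]
  refine union_subset_union ?_ ?_
  · refine Measure.support_subset_of_isClosed (t := {x}) isClosed_singleton ?_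
    simp [Function.comp_def, mem_ae_iff]
  · exact Measure.support_mono (Measure.map_mono Measure.restrict_le_self measurable_fst)

lemma integral_replaceFstOn_add_le [MetricSpace X] [CompactSpace X] [BorelSpace X]
    [IsFiniteMeasure γ] (hB : MeasurableSet B) {x : X} {c : ℝ}
    (hgain : ∀ᵐ p ∂γ, p.2 ∈ B → dist x p.2 ^ 2 + c ≤ dist p.1 p.2 ^ 2) :
    ∫ p, dist p.1 p.2 ^ 2 ∂(replaceFstOn γ B x) + c * γ.real (Prod.snd ⁻¹' B) ≤
      ∫ p, dist p.1 p.2 ^ 2 ∂γ := by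
  set s : Set (X × X) := Prod.snd ⁻¹' B
  have hs : MeasurableSet s := measurable_snd hB
  have hmk : Measurable fun p : X × X => (x, p.2) := measurable_const.prodMk measurable_snd
  have hcost : Continuous fun p : X × X => dist p.1 p.2 ^ 2 :=
    (continuous_fst.dist continuous_snd).pow 2
  have hnew : Continuous fun p : X × X => dist x p.2 ^ 2 :=
    (continuous_const.dist continuous_snd).pow 2
  have hsaving : ∫ p in s, dist x p.2 ^ 2 ∂γ + c * γ.real s ≤ ∫ p in s, dist p.1 p.2 ^ 2 ∂γ := by
    calc ∫ p in s, dist x p.2 ^ 2 ∂γ + c * γ.real s = ∫ p in s, (dist x p.2 ^ 2 + c) ∂γ := by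
          rw [integral_add (hnew.integrable_of_compactSpace _) (integrable_const c),
            setIntegral_const, smul_eq_mul, mul_comm]
      _ ≤ ∫ p in s, dist p.1 p.2 ^ 2 ∂γ :=
          setIntegral_mono_on_ae
            (Continuous.integrable_of_compactSpace (by fun_prop) _).integrableOn
            (hcost.integrable_of_compactSpace _).integrableOn hs hgain
  rw [replaceFstOn, integral_add_measure (hcost.integrable_of_compactSpace _)
    (hcost.integrable_of_compactSpace _), integral_map hmk.aemeasurable
    hcost.aestronglyMeasurable, ← integral_add_compl hs (hcost.integrable_of_compactSpace γ)]
  linarith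

end ReplaceFst

theorem exists_W2sq_lt_of_notMem_support {X : Type*} [MetricSpace X] [CompactSpace X]
    [MeasurableSpace X] [BorelSpace X] (ν m : ProbabilityMeasure X) {x : X}
    (hxm : x ∈ (m : Measure X).support) (hxν : x ∉ (ν : Measure X).support) :
    ∃ ν' : ProbabilityMeasure X,
      (ν' : Measure X).support ⊆ insert x (ν : Measure X).support ∧ W2sq ν' m < W2sq ν m := by
  set S := (ν : Measure X).support
  have hδ : 0 < infDist x S := (Measure.isClosed_support.notMem_iff_infDist_pos
    (Measure.nonempty_support (IsProbabilityMeasure.ne_zero _))).mp hxν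
  set ε := infDist x S / 3 with hε_def
  have hε : 0 < ε := by positivity
  have hmB : 0 < (m : Measure X).real (ball x ε) := ENNReal.toReal_pos
    ((Measure.mem_support_iff_forall x).mp hxm _ (ball_mem_nhds x hε)).ne' (measure_ne_top _ _)
  obtain ⟨γ, hγ, hγlt⟩ := exists_isCoupling_integral_lt ν m
    (κ := 3 * ε ^ 2 * (m : Measure X).real (ball x ε)) (by positivity)
  have := hγ.isProbabilityMeasure
  have hB : MeasurableSet (ball x ε) := measurableSet_ball
  have hgain : ∀ᵐ p ∂γ, p.2 ∈ ball x ε → dist x p.2 ^ 2 + 3 * ε ^ 2 ≤ dist p.1 p.2 ^ 2 := by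
    filter_upwards [hγ.ae_fst_mem_support] with p hp hpB
    have hfar : 3 * ε ≤ dist x p.1 := by linarith [infDist_le_dist_of_mem hp (x := x)]
    have hnear : dist x p.2 < ε := mem_ball'.mp hpB
    have htri : dist x p.1 ≤ dist x p.2 + dist p.1 p.2 := by
      simpa only [dist_comm p.2 p.1] using dist_triangle x p.2 p.1
    nlinarith [dist_nonneg (x := x) (y := p.2)]
  have hmass : γ.real (Prod.snd ⁻¹' ball x ε) = (m : Measure X).real (ball x ε) := by
    rw [← map_measureReal_apply measurable_snd hB, hγ.2]
  obtain ⟨ν', hν', hcoup⟩ := exists_isCoupling_of_map_snd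
    ((map_snd_replaceFstOn hB x).trans hγ.2)
  refine ⟨ν', ?_, ?_⟩
  · have := support_map_fst_replaceFstOn_subset (γ := γ) (B := ball x ε) x
    rwa [hγ.1, ← hν'] at this
  · have := integral_replaceFstOn_add_le hB hgain
    rw [hmass] at this
    linarith [W2sq_le_integral hcoup]

theorem support_m_inter_bary_subset_general
    {X : Type*} [MetricSpace X] [CompactSpace X]
    [MeasurableSpace X] [BorelSpace X]
    (m : ProbabilityMeasure X) (μ : ProbabilityMeasure X)
    (Bμ : ProbabilityMeasure X)
    (hB₁ : mSupport Bμ ⊆ bary μ)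
    (hB₂ : ∀ ν : ProbabilityMeasure X, mSupport ν ⊆ bary μ → W2 Bμ m ≤ W2 ν m) :
    mSupport m ∩ bary μ ⊆ mSupport Bμ := by
  rintro x ⟨hxm, hxb⟩
  by_contra hx
  rw [mSupport_eq_support] at hxm hx hB₁
  obtain ⟨ν', hν'supp, hν'lt⟩ := exists_W2sq_lt_of_notMem_support Bμ m hxm hx
  have hν' : mSupport ν' ⊆ bary μ := by
    rw [mSupport_eq_support]
    exact hν'supp.trans (insert_subset hxb hB₁)
  exact (hB₂ ν' hν').not_gt (Real.sqrt_lt_sqrt (W2sq_nonneg ν' m) hν'lt)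

/-- If `(X,d,m)` is regular and `B(μ)` is the minimizer of `ν ↦ W₂(ν,m)` among all `ν`
with `supp ν ⊆ b(μ)`, then `supp m ∩ b(μ) ⊆ supp B(μ)`. -/
theorem support_m_inter_bary_subset
    {X : Type*} [MetricSpace X] [CompactSpace X]
    [MeasurableSpace X] [BorelSpace X]
    (m : ProbabilityMeasure X) (hreg : Regular m) (μ : ProbabilityMeasure X)
    (Bμ : ProbabilityMeasure X)
    (hB₁ : mSupport Bμ ⊆ bary μ)
    (hB₂ : ∀ ν : ProbabilityMeasure X, mSupport ν ⊆ bary μ → W2 Bμ m ≤ W2 ν m) :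
    mSupport m ∩ bary μ ⊆ mSupport Bμ :=
  support_m_inter_bary_subset_general m μ Bμ hB₁ hB₂
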